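/- arXiv:1207.6960 — 8 statements merged into one kernel-verified Lean document; each statement's English description precedes it below -/
import Mathlib

section
/- Suppose there exists a bounded representation of G, i.e., a unit interval representation ℓ with lbound(v) ≤ ℓ(v) ≤ ubound(v) for all v ∈ V. Then there exists a bounded representation ℓ' of G such that for every pair of indistinguishable vertices u, v with lbound(u) ≤ lbound(v) it holds that ℓ'(u) ≤ ℓ'(v). -/
/-- A unit interval representation of `G`: distinct vertices are adjacent iff their
points are at distance at most `1`. -/
def IsUIRep {V : Type*} (G : SimpleGraph V) (ℓ : V → ℝ) : Prop :=
  ∀ u v : V, u ≠ v → (G.Adj u v ↔ |ℓ u - ℓ v| ≤ 1)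

/-- Two vertices are indistinguishable if they have the same closed neighborhood. -/
def Indist {V : Type*} (G : SimpleGraph V) (u v : V) : Prop :=
  ∀ w : V, (w = u ∨ G.Adj u w) ↔ (w = v ∨ G.Adj v w)

lemma indist_refl {V : Type*} (G : SimpleGraph V) (v : V) : Indist G v v :=
  fun _ => Iff.rfl

lemma indist_symm {V : Type*} {G : SimpleGraph V} {u v : V} (h : Indist G u v) :
    Indist G v u := fun w => (h w).symm

lemma indist_trans {V : Type*} {G : SimpleGraph V} {u v w : V}
    (h1 : Indist G u v) (h2 : Indist G v w) : Indist G u w :=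
  fun x => (h1 x).trans (h2 x)

lemma indist_adj {V : Type*} {G : SimpleGraph V} {u v : V}
    (h : Indist G u v) (hne : u ≠ v) : G.Adj u v := by
  have := (h u).mp (Or.inl rfl)
  rcases this with h' | h'
  · exact absurd h' hne
  · exact h'.symm

lemma indist_adj_iff {V : Type*} {G : SimpleGraph V} {u u' y : V}
    (h : Indist G u u') (h1 : y ≠ u) (h2 : y ≠ u') :
    G.Adj u y ↔ G.Adj u' y := by
  have := h y
  constructor
  · intro ha
    rcases this.mp (Or.inr ha) with h' | h'
    · exact absurd h' h2
    · exact h'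
  · intro ha
    rcases this.mpr (Or.inr ha) with h' | h'
    · exact absurd h' h1
    · exact h'

/-- if a bounded representation exists, then one exists in which, within
every pair of indistinguishable vertices, smaller lower bound implies smaller position. -/
theorem stmt0 {V : Type*} [Fintype V] (G : SimpleGraph V) (lbound ubound : V → ℝ)
    (h : ∃ ℓ : V → ℝ, IsUIRep G ℓ ∧ (∀ v, lbound v ≤ ℓ v) ∧ (∀ v, ℓ v ≤ ubound v)) :
    ∃ ℓ' : V → ℝ, (IsUIRep G ℓ' ∧ (∀ v, lbound v ≤ ℓ' v) ∧ (∀ v, ℓ' v ≤ ubound v)) ∧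
      ∀ u v : V, Indist G u v → lbound u ≤ lbound v → ℓ' u ≤ ℓ' v := by
  classical
  obtain ⟨ℓ, hrep, hlb, hub⟩ := h
  set S : V → Finset V :=
    fun v => Finset.univ.filter (fun w => Indist G v w ∧ lbound v ≤ lbound w) with hS
  have hmem : ∀ v, v ∈ S v := by
    intro v; simp [hS, indist_refl]
  have hne : ∀ v, (S v).Nonempty := fun v => ⟨v, hmem v⟩
  have hwit : ∀ v, ∃ a, Indist G v a ∧ lbound v ≤ lbound a ∧
      (S v).inf' (hne v) ℓ = ℓ a := by
    intro v
    obtain ⟨a, ha, hA⟩ := Finset.exists_mem_eq_inf' (hne v) ℓ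
    simp only [hS, Finset.mem_filter, Finset.mem_univ, true_and] at ha
    exact ⟨a, ha.1, ha.2, hA⟩
  refine ⟨fun v => (S v).inf' (hne v) ℓ, ⟨?_, ?_, ?_⟩, ?_⟩
  · -- rep
    intro u v huv
    obtain ⟨a, hua, _, hA⟩ := hwit u
    obtain ⟨b, hvb, _, hB⟩ := hwit v
    simp only [hA, hB]
    by_cases hab : a = b
    · subst hab
      have huv' : Indist G u v := indist_trans hua (indist_symm hvb)
      simp only [sub_self, abs_zero]
      exact ⟨fun _ => by norm_num, fun _ => indist_adj huv' huv⟩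
    · rw [← hrep a b hab]
      by_cases hav : a = v
      · constructor
        · intro _
          have hab' : Indist G a b := by rw [hav]; exact hvb
          exact indist_adj hab' hab
        · intro _
          have huv' : Indist G u v := by rw [← hav]; exact hua
          exact indist_adj huv' huv
      · by_cases hbu : b = u
        · constructor
          · intro _
            have hab' : Indist G a b := by rw [hbu]; exact indist_symm hua
            exact indist_adj hab' hab
          · intro _
            have huv' : Indist G u v := by rw [← hbu]; exact indist_symm hvb
            exact indist_adj huv' huv
        · have e1 : G.Adj u v ↔ G.Adj a v :=
            indist_adj_iff hua (Ne.symm huv) (fun e => hav e.symm)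
          have e2 : G.Adj v a ↔ G.Adj b a :=
            indist_adj_iff hvb hav hab
          rw [e1, G.adj_comm, e2, G.adj_comm]
  · -- lower bound
    intro v
    obtain ⟨a, _, hla, hA⟩ := hwit v
    show lbound v ≤ (S v).inf' (hne v) ℓ
    rw [hA]
    exact le_trans hla (hlb a)
  · -- upper bound
    intro v
    exact le_trans (Finset.inf'_le ℓ (hmem v)) (hub v)
  · -- monotone
    intro u v hind hl
    obtain ⟨b, hvb, hlb', hB⟩ := hwit v
    show (S u).inf' (hne u) ℓ ≤ (S v).inf' (hne v) ℓ
    rw [hB]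
    have hbu : b ∈ S u := by
      simp only [hS, Finset.mem_filter, Finset.mem_univ, true_and]
      exact ⟨indist_trans hind hvb, le_trans hl hlb'⟩
    exact Finset.inf'_le ℓ hbu
end

section
/- For every nonempty subset S of Rep, the infimum of S in the pointwise partial order exists: the function ℓ* defined by ℓ*(v) = min{ℓ(v) : ℓ ∈ S} is well-defined (the minimum is attained), ℓ* belongs to Rep, ℓ* ≤ ℓ for every ℓ ∈ S, and every ℓ'' ∈ Rep with ℓ'' ≤ ℓ for all ℓ ∈ S satisfies ℓ'' ≤ ℓ*. -/
/-- `GridRep G lt K lbound ℓ`: `ℓ` is an `ε`-grid (`ε = 1/K`) unit interval representation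
of `G` whose left-to-right order extends `lt` and which satisfies the lower bounds. -/
def GridRep {V : Type*} (G : SimpleGraph V) (lt : V → V → Prop) (K : ℕ) (lbound : V → ℝ)
    (ℓ : V → ℝ) : Prop :=
  IsUIRep G ℓ ∧ (∀ v : V, ∃ m : ℤ, ℓ v = m * (1 / (K : ℝ))) ∧
    (∀ u v : V, lt u v → ℓ u ≤ ℓ v) ∧ (∀ v : V, lbound v ≤ ℓ v)

/-- every nonempty subset of `Rep` has an infimum, namely the pointwise
minimum, which is attained, belongs to `Rep`, and is the greatest lower bound. -/
theorem stmt2 {V : Type*} [Fintype V] (G : SimpleGraph V) (lt : V → V → Prop)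
    (hirr : ∀ v : V, ¬ lt v v)
    (htrans : ∀ a b c : V, lt a b → lt b c → lt a c)
    (hcomp : ∀ u v : V, ¬ Indist G u v → lt u v ∨ lt v u)
    (K : ℕ) (hK : 0 < K) (lbound : V → ℝ)
    (S : Set (V → ℝ)) (hSne : S.Nonempty) (hS : ∀ ℓ ∈ S, GridRep G lt K lbound ℓ) :
    ∃ ℓstar : V → ℝ,
      (∀ v : V, (∃ ℓ ∈ S, ℓstar v = ℓ v) ∧ ∀ ℓ ∈ S, ℓstar v ≤ ℓ v) ∧
      GridRep G lt K lbound ℓstar ∧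
      (∀ ℓ ∈ S, ∀ v : V, ℓstar v ≤ ℓ v) ∧
      (∀ ℓ'' : V → ℝ, GridRep G lt K lbound ℓ'' → (∀ ℓ ∈ S, ∀ v : V, ℓ'' v ≤ ℓ v) →
        ∀ v : V, ℓ'' v ≤ ℓstar v) := by
  classical
  have hKR : (0:ℝ) < 1 / (K:ℝ) := by positivity
  -- the minimum at each vertex is attained
  have attain : ∀ v : V, ∃ ℓ0 ∈ S, ∀ ℓ ∈ S, ℓ0 v ≤ ℓ v := by
    intro v
    set P : ℤ → Prop := fun m => ∃ ℓ ∈ S, ℓ v = m * (1/(K:ℝ)) with hP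
    have hne : ∃ m, P m := by
      obtain ⟨ℓ, hℓ⟩ := hSne
      obtain ⟨m, hm⟩ := (hS ℓ hℓ).2.1 v
      exact ⟨m, ℓ, hℓ, hm⟩
    have hbdd : ∃ b : ℤ, ∀ m, P m → b ≤ m := by
      refine ⟨⌈lbound v * K⌉, ?_⟩
      rintro m ⟨ℓ, hℓ, hm⟩
      have h1 : lbound v ≤ (m:ℝ) * (1/(K:ℝ)) := hm ▸ (hS ℓ hℓ).2.2.2 v
      have h2 : lbound v * K ≤ (m:ℝ) := by
        have := mul_le_mul_of_nonneg_right h1 (le_of_lt (by positivity : (0:ℝ) < (K:ℝ)))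
        calc lbound v * K ≤ (m:ℝ) * (1/(K:ℝ)) * K := this
          _ = m := by field_simp
      exact_mod_cast Int.ceil_le.mpr h2
    obtain ⟨m0, hm0, hmin⟩ := Int.exists_least_of_bdd hbdd hne
    obtain ⟨ℓ0, hℓ0S, hℓ0v⟩ := hm0
    refine ⟨ℓ0, hℓ0S, ?_⟩
    intro ℓ hℓ
    obtain ⟨m, hm⟩ := (hS ℓ hℓ).2.1 v
    have : m0 ≤ m := hmin m ⟨ℓ, hℓ, hm⟩
    rw [hℓ0v, hm]
    exact mul_le_mul_of_nonneg_right (by exact_mod_cast this) (le_of_lt hKR)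
  choose f hfS hfmin using attain
  set ℓstar : V → ℝ := fun v => f v v with hℓstar
  have hatt : ∀ v : V, ∃ ℓ ∈ S, ℓstar v = ℓ v := fun v => ⟨f v, hfS v, rfl⟩
  have hmin : ∀ v : V, ∀ ℓ ∈ S, ℓstar v ≤ ℓ v := fun v ℓ hℓ => hfmin v ℓ hℓ
  -- key: if lt u v and not adjacent, gap stays > 1
  have gap : ∀ u v : V, lt u v → ¬ G.Adj u v → ℓstar u + 1 < ℓstar v := by
    intro u v hlt hnadj
    obtain ⟨ℓ2, hℓ2S, hℓ2⟩ := hatt v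
    have hne : u ≠ v := fun h => hirr v (h ▸ hlt)
    have h1 : ¬ |ℓ2 u - ℓ2 v| ≤ 1 := fun h => hnadj (((hS ℓ2 hℓ2S).1 u v hne).mpr h)
    have h2 : ℓ2 u ≤ ℓ2 v := (hS ℓ2 hℓ2S).2.2.1 u v hlt
    have h3 : ℓ2 u + 1 < ℓ2 v := by
      rcases lt_or_ge (ℓ2 u + 1) (ℓ2 v) with h | h
      · exact h
      · exact absurd (abs_sub_le_iff.mpr ⟨by linarith, by linarith⟩) h1
    calc ℓstar u + 1 ≤ ℓ2 u + 1 := by linarith [hmin u ℓ2 hℓ2S]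
      _ < ℓ2 v := h3
      _ = ℓstar v := hℓ2.symm
  have hrep : GridRep G lt K lbound ℓstar := by
    refine ⟨?_, ?_, ?_, ?_⟩
    · intro u v hne
      constructor
      · intro hadj
        obtain ⟨ℓ1, hℓ1S, hℓ1⟩ := hatt u
        obtain ⟨ℓ2, hℓ2S, hℓ2⟩ := hatt v
        have a1 : |ℓ1 u - ℓ1 v| ≤ 1 := ((hS ℓ1 hℓ1S).1 u v hne).mp hadj
        have a2 : |ℓ2 u - ℓ2 v| ≤ 1 := ((hS ℓ2 hℓ2S).1 u v hne).mp hadj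
        rw [abs_sub_le_iff] at a1 a2 ⊢
        have b1 := hmin u ℓ2 hℓ2S
        have b2 := hmin v ℓ1 hℓ1S
        constructor <;> [skip; skip] <;>
          · rw [hℓ1, hℓ2] at *
            first
            | linarith [a1.1, a2.1, a1.2, a2.2]
      · intro habs
        by_contra hnadj
        have hni : ¬ Indist G u v := by
          intro hind
          have := (hind u).mp (Or.inl rfl)
          rcases this with h | h
          · exact hne h
          · exact hnadj h.symm
        rcases hcomp u v hni with h | h
        · have := gap u v h hnadj
          have : ¬ |ℓstar u - ℓstar v| ≤ 1 := by
            rw [abs_sub_le_iff]; push_neg; intro; linarith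
          exact this habs
        · have := gap v u h (fun ha => hnadj ha.symm)
          have : ¬ |ℓstar u - ℓstar v| ≤ 1 := by
            rw [abs_sub_le_iff]; push_neg; intro; linarith
          exact this habs
    · intro v
      obtain ⟨ℓ2, hℓ2S, hℓ2⟩ := hatt v
      obtain ⟨m, hm⟩ := (hS ℓ2 hℓ2S).2.1 v
      exact ⟨m, hℓ2 ▸ hm⟩
    · intro u v hlt
      obtain ⟨ℓ2, hℓ2S, hℓ2⟩ := hatt v
      calc ℓstar u ≤ ℓ2 u := hmin u ℓ2 hℓ2S
        _ ≤ ℓ2 v := (hS ℓ2 hℓ2S).2.2.1 u v hlt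
        _ = ℓstar v := hℓ2.symm
    · intro v
      obtain ⟨ℓ2, hℓ2S, hℓ2⟩ := hatt v
      exact hℓ2 ▸ (hS ℓ2 hℓ2S).2.2.2 v
  refine ⟨ℓstar, fun v => ⟨hatt v, hmin v⟩, hrep, fun ℓ hℓ v => hmin v ℓ hℓ, ?_⟩
  intro ℓ'' _ hle v
  obtain ⟨ℓ2, hℓ2S, hℓ2⟩ := hatt v
  exact hℓ2 ▸ hle ℓ2 hℓ2S v
end

section
/- If Rep is nonempty, then there exists a unique left-most representation, i.e., a unique ℓ* ∈ Rep such that ℓ*(v) ≤ ℓ(v) for every ℓ ∈ Rep and every v ∈ V. -/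
lemma gridRep_min {V : Type*} {G : SimpleGraph V} {lt : V → V → Prop}
    (hcomp : ∀ u v : V, ¬ Indist G u v → lt u v ∨ lt v u)
    {K : ℕ} {lbound : V → ℝ} {ℓ1 ℓ2 : V → ℝ}
    (h1 : GridRep G lt K lbound ℓ1) (h2 : GridRep G lt K lbound ℓ2) :
    GridRep G lt K lbound (fun v => min (ℓ1 v) (ℓ2 v)) := by
  obtain ⟨h1r, h1g, h1o, h1b⟩ := h1
  obtain ⟨h2r, h2g, h2o, h2b⟩ := h2
  refine ⟨?_, ?_, ?_, ?_⟩
  · intro u v huv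
    have hA1 := h1r u v huv
    have hA2 := h2r u v huv
    simp only
    constructor
    · intro hadj
      have e1 := abs_le.mp (hA1.mp hadj)
      have e2 := abs_le.mp (hA2.mp hadj)
      rw [abs_le]
      constructor
      · rcases min_cases (ℓ1 u) (ℓ2 u) with ⟨hu, _⟩ | ⟨hu, _⟩ <;> rw [hu] <;>
          [linarith [min_le_left (ℓ1 v) (ℓ2 v)]; linarith [min_le_right (ℓ1 v) (ℓ2 v)]]
      · rcases min_cases (ℓ1 v) (ℓ2 v) with ⟨hv, _⟩ | ⟨hv, _⟩ <;> rw [hv] <;>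
          [linarith [min_le_left (ℓ1 u) (ℓ2 u)]; linarith [min_le_right (ℓ1 u) (ℓ2 u)]]
    · intro habs
      by_contra hna
      have hnind : lt u v ∨ lt v u := by
        apply hcomp
        intro hind
        rcases (hind u).mp (Or.inl rfl) with h | h
        · exact huv h
        · exact hna h.symm
      have g1 : 1 < |ℓ1 u - ℓ1 v| := lt_of_not_ge fun h => hna (hA1.mpr h)
      have g2 : 1 < |ℓ2 u - ℓ2 v| := lt_of_not_ge fun h => hna (hA2.mpr h)
      have hb := abs_le.mp habs
      rcases hnind with hlt | hlt
      · have o1 := h1o u v hlt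
        have o2 := h2o u v hlt
        have d1 : 1 < ℓ1 v - ℓ1 u := by
          rcases abs_cases (ℓ1 u - ℓ1 v) with ⟨he, _⟩ | ⟨he, _⟩ <;> linarith
        have d2 : 1 < ℓ2 v - ℓ2 u := by
          rcases abs_cases (ℓ2 u - ℓ2 v) with ⟨he, _⟩ | ⟨he, _⟩ <;> linarith
        rcases min_cases (ℓ1 v) (ℓ2 v) with ⟨hv, _⟩ | ⟨hv, _⟩ <;> rw [hv] at hb <;>
          [linarith [min_le_left (ℓ1 u) (ℓ2 u)]; linarith [min_le_right (ℓ1 u) (ℓ2 u)]]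
      · have o1 := h1o v u hlt
        have o2 := h2o v u hlt
        have d1 : 1 < ℓ1 u - ℓ1 v := by
          rcases abs_cases (ℓ1 u - ℓ1 v) with ⟨he, _⟩ | ⟨he, _⟩ <;> linarith
        have d2 : 1 < ℓ2 u - ℓ2 v := by
          rcases abs_cases (ℓ2 u - ℓ2 v) with ⟨he, _⟩ | ⟨he, _⟩ <;> linarith
        rcases min_cases (ℓ1 u) (ℓ2 u) with ⟨hu, _⟩ | ⟨hu, _⟩ <;> rw [hu] at hb <;>
          [linarith [min_le_left (ℓ1 v) (ℓ2 v)]; linarith [min_le_right (ℓ1 v) (ℓ2 v)]]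
  · intro v
    rcases min_cases (ℓ1 v) (ℓ2 v) with ⟨hv, _⟩ | ⟨hv, _⟩
    · obtain ⟨m, hm⟩ := h1g v
      exact ⟨m, by simp only []; rw [hv, hm]⟩
    · obtain ⟨m, hm⟩ := h2g v
      exact ⟨m, by simp only []; rw [hv, hm]⟩
  · intro u v h
    exact le_min (le_trans (min_le_left _ _) (h1o u v h))
      (le_trans (min_le_right _ _) (h2o u v h))
  · intro v
    exact le_min (h1b v) (h2b v)

lemma exists_vertex_min {V : Type*} {G : SimpleGraph V} {lt : V → V → Prop}
    {K : ℕ} (hK : 0 < K) {lbound : V → ℝ}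
    (hne : ∃ ℓ : V → ℝ, GridRep G lt K lbound ℓ) (v : V) :
    ∃ ℓv : V → ℝ, GridRep G lt K lbound ℓv ∧
      ∀ ℓ' : V → ℝ, GridRep G lt K lbound ℓ' → ℓv v ≤ ℓ' v := by
  have hKpos : (0 : ℝ) < K := by exact_mod_cast hK
  set P : ℤ → Prop := fun m => ∃ ℓ, GridRep G lt K lbound ℓ ∧ ℓ v = m * (1 / (K : ℝ))
    with hP
  have hval : ∀ {ℓ : V → ℝ} {m : ℤ}, GridRep G lt K lbound ℓ →
      ℓ v = m * (1 / (K : ℝ)) → (⌈lbound v * K⌉ : ℤ) ≤ m := by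
    intro ℓ m h hm
    have hb := h.2.2.2 v
    rw [hm] at hb
    have : lbound v * K ≤ m := by
      have hKne : (K : ℝ) ≠ 0 := ne_of_gt hKpos
      have hmm : (m : ℝ) * (1 / K) * K = m := by field_simp
      nlinarith
    exact Int.ceil_le.mpr this
  have hbdd : ∃ b : ℤ, ∀ z : ℤ, P z → b ≤ z := by
    refine ⟨⌈lbound v * K⌉, ?_⟩
    rintro z ⟨ℓ, h, hm⟩
    exact hval h hm
  have hinh : ∃ z : ℤ, P z := by
    obtain ⟨ℓ0, h0⟩ := hne
    obtain ⟨m, hm⟩ := h0.2.1 v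
    exact ⟨m, ℓ0, h0, hm⟩
  obtain ⟨lb, ⟨ℓv, hℓv, hval'⟩, hleast⟩ := Int.exists_least_of_bdd hbdd hinh
  refine ⟨ℓv, hℓv, ?_⟩
  intro ℓ' h'
  obtain ⟨m', hm'⟩ := h'.2.1 v
  have : lb ≤ m' := hleast m' ⟨ℓ', h', hm'⟩
  rw [hval', hm']
  have : (lb : ℝ) ≤ m' := by exact_mod_cast this
  have hpos : 0 ≤ 1 / (K : ℝ) := by positivity
  exact mul_le_mul_of_nonneg_right this hpos

/-- if `Rep` is nonempty, it has a unique left-most representation. -/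
theorem stmt3 {V : Type*} [Fintype V] (G : SimpleGraph V) (lt : V → V → Prop)
    (hirr : ∀ v : V, ¬ lt v v)
    (htrans : ∀ a b c : V, lt a b → lt b c → lt a c)
    (hcomp : ∀ u v : V, ¬ Indist G u v → lt u v ∨ lt v u)
    (K : ℕ) (hK : 0 < K) (lbound : V → ℝ)
    (hne : ∃ ℓ : V → ℝ, GridRep G lt K lbound ℓ) :
    ∃! ℓstar : V → ℝ, GridRep G lt K lbound ℓstar ∧
      ∀ ℓ : V → ℝ, GridRep G lt K lbound ℓ → ∀ v : V, ℓstar v ≤ ℓ v := by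
  classical
  have key : ∀ s : Finset V, ∃ ℓ : V → ℝ, GridRep G lt K lbound ℓ ∧
      ∀ v ∈ s, ∀ ℓ' : V → ℝ, GridRep G lt K lbound ℓ' → ℓ v ≤ ℓ' v := by
    intro s
    induction s using Finset.induction_on with
    | empty => obtain ⟨ℓ0, h0⟩ := hne; exact ⟨ℓ0, h0, by simp⟩
    | @insert a s' hx ih =>
      obtain ⟨ℓ, hℓ, hmin⟩ := ih
      obtain ⟨ℓa, hℓa, hmina⟩ := exists_vertex_min hK hne a
      refine ⟨fun v => min (ℓ v) (ℓa v), gridRep_min hcomp hℓ hℓa, ?_⟩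
      intro v hv ℓ' h'
      rcases Finset.mem_insert.mp hv with rfl | hv'
      · exact le_trans (min_le_right _ _) (hmina ℓ' h')
      · exact le_trans (min_le_left _ _) (hmin v hv' ℓ' h')
  obtain ⟨ℓstar, hstar, hmin⟩ := key Finset.univ
  have hmin' : ∀ ℓ : V → ℝ, GridRep G lt K lbound ℓ → ∀ v : V, ℓstar v ≤ ℓ v :=
    fun ℓ h v => hmin v (Finset.mem_univ v) ℓ h
  refine ⟨ℓstar, ⟨hstar, hmin'⟩, ?_⟩
  rintro ℓ' ⟨h', hmin''⟩
  funext v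
  exact le_antisymm (hmin'' ℓstar hstar v) (hmin' ℓ' h' v)
end

section
/- Assume K ≥ n where n = |V|. A representation ℓ ∈ Rep is the left-most representation (i.e., ℓ ≤ ℓ'' pointwise for every ℓ'' ∈ Rep) if and only if there is no vertex v ∈ V such that the function ℓ' defined by ℓ'(v) = ℓ(v) − ε and ℓ'(u) = ℓ(u) for all u ≠ v belongs to Rep. -/
/-!
If no vertex of `ℓ` can be moved left by `ε = 1 / K`, then for every `ℓ'' ∈ Rep` and every `v`
with `ℓ'' v < ℓ v` the move of `v` is blocked by some `u` that again satisfies `ℓ'' u < ℓ u`: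
`u` sits at `ℓ v + 1`, at `ℓ v - 1 - ε`, or at `ℓ v` with `u < v`. Following blockers inside the
finite set `{v | ℓ'' v < ℓ v}` closes a cycle of length at most `n ≤ K`. Along it the
displacements `+K ε` and `-(K + 1) ε` must cancel, which needs at least `K + 1` upward steps
unless there are none; so the cycle consists of `<`-steps only, contradicting irreflexivity.
-/

open Finset Function

lemma add_le_of_lt_of_grid {ε a b : ℝ} (hε : 0 < ε) (ha : ∃ m : ℤ, a = m * ε)
    (hb : ∃ m : ℤ, b = m * ε) (hab : a < b) : a + ε ≤ b := by
  obtain ⟨p, rfl⟩ := ha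
  obtain ⟨q, rfl⟩ := hb
  have hpq : p + 1 ≤ q := by exact_mod_cast (lt_of_mul_lt_mul_right hab hε.le)
  have : ((p + 1 : ℤ) : ℝ) * ε ≤ q * ε := by gcongr
  push_cast at this
  linarith

lemma abs_sub_one_div_sub_le_one_iff {K : ℕ} (hK : 0 < K) {a b : ℝ}
    (ha : ∃ m : ℤ, a = m * (1 / (K : ℝ))) (hb : ∃ m : ℤ, b = m * (1 / (K : ℝ)))
    (hb₁ : b ≠ a + 1) (hb₂ : b ≠ a - (1 + 1 / (K : ℝ))) :
    |a - 1 / (K : ℝ) - b| ≤ 1 ↔ |a - b| ≤ 1 := by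
  have hε : (0 : ℝ) < 1 / K := by positivity
  have grid_add (c : ℝ) (hc : ∃ m : ℤ, c = m * (1 / (K : ℝ))) :
      ∃ m : ℤ, c + 1 = m * (1 / (K : ℝ)) := by
    obtain ⟨p, rfl⟩ := hc
    exact ⟨p + K, by push_cast; field_simp⟩
  simp only [abs_le]
  constructor
  · rintro ⟨h₁, h₂⟩
    refine ⟨by linarith, ?_⟩
    by_contra! h
    have := add_le_of_lt_of_grid hε (grid_add b hb) ha (by linarith)
    exact hb₂ (by linarith)
  · rintro ⟨h₁, h₂⟩
    refine ⟨?_, by linarith⟩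
    have := add_le_of_lt_of_grid hε hb (grid_add a ha) (lt_of_le_of_ne (by linarith) hb₁)
    linarith

lemma IsUIRep.update {V : Type*} [DecidableEq V] {G : SimpleGraph V} {ℓ : V → ℝ}
    (hℓ : IsUIRep G ℓ) {v : V} {x : ℝ}
    (hv : ∀ b, b ≠ v → (G.Adj v b ↔ |x - ℓ b| ≤ 1)) : IsUIRep G (update ℓ v x) := by
  intro a b hab
  rcases eq_or_ne a v with rfl | ha
  · rw [update_self, update_of_ne hab.symm]
    exact hv b hab.symm
  rcases eq_or_ne b v with rfl | hb
  · rw [update_self, update_of_ne ha, G.adj_comm, abs_sub_comm]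
    exact hv a ha
  · rw [update_of_ne ha, update_of_ne hb]
    exact hℓ a b hab

lemma GridRep.update_sub {V : Type*} [DecidableEq V] {G : SimpleGraph V} {lt : V → V → Prop}
    {K : ℕ} (hK : 0 < K) {lbound ℓ : V → ℝ} (hℓ : GridRep G lt K lbound ℓ) {v : V}
    (hadj : ∀ b, b ≠ v → (|ℓ v - 1 / (K : ℝ) - ℓ b| ≤ 1 ↔ |ℓ v - ℓ b| ≤ 1))
    (hord : ∀ u, lt u v → ℓ u < ℓ v) (hlb : lbound v ≤ ℓ v - 1 / (K : ℝ)) :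
    GridRep G lt K lbound (update ℓ v (ℓ v - 1 / (K : ℝ))) := by
  obtain ⟨hUI, hgrid, hmono, hlbound⟩ := hℓ
  have hε : (0 : ℝ) < 1 / K := by positivity
  refine ⟨hUI.update fun b hb => (hUI v b hb.symm).trans (hadj b hb).symm, fun x => ?_,
    fun a b hab => ?_, fun x => ?_⟩
  · rcases eq_or_ne x v with rfl | hx
    · obtain ⟨p, hp⟩ := hgrid x
      exact ⟨p - 1, by rw [update_self, hp]; push_cast; ring⟩
    · rw [update_of_ne hx]
      exact hgrid x
  · rcases eq_or_ne b v with rfl | hb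
    · rcases eq_or_ne a b with rfl | ha
      · exact le_rfl
      · rw [update_self, update_of_ne ha]
        linarith [add_le_of_lt_of_grid hε (hgrid a) (hgrid b) (hord a hab)]
    · rw [update_of_ne hb]
      rcases eq_or_ne a v with rfl | ha
      · rw [update_self]
        linarith [hmono a b hab]
      · rw [update_of_ne ha]
        exact hmono a b hab
  · rcases eq_or_ne x v with rfl | hx
    · rwa [update_self]
    · rw [update_of_ne hx]
      exact hlbound x

/-- Moving `v` from `ℓ v` to `ℓ v - 1 / K` would make `u` non-adjacent to `v`, make it adjacent to
`v`, or violate `lt u v`. -/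
def Blocks {V : Type*} (lt : V → V → Prop) (K : ℕ) (ℓ : V → ℝ) (u v : V) : Prop :=
  ℓ u = ℓ v + 1 ∨ ℓ u = ℓ v - (1 + 1 / (K : ℝ)) ∨ (ℓ u = ℓ v ∧ lt u v)

lemma not_indist_of_not_adj {V : Type*} {G : SimpleGraph V} {u v : V} (hne : u ≠ v)
    (hadj : ¬ G.Adj u v) : ¬ Indist G u v := fun h =>
  ((h v).2 (Or.inl rfl)).elim hne.symm hadj

lemma exists_blocks_of_not_gridRep_update {V : Type*} [DecidableEq V] {G : SimpleGraph V}
    {lt : V → V → Prop} (hcomp : ∀ u v : V, ¬ Indist G u v → lt u v ∨ lt v u)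
    {K : ℕ} (hK : 0 < K) {lbound ℓ ℓ' : V → ℝ} (hℓ : GridRep G lt K lbound ℓ)
    (hℓ' : GridRep G lt K lbound ℓ') {v : V} (hv : ℓ' v < ℓ v)
    (hshift : ¬ GridRep G lt K lbound (update ℓ v (ℓ v - 1 / (K : ℝ)))) :
    ∃ u, ℓ' u < ℓ u ∧ Blocks lt K ℓ u v := by
  by_contra! hfree
  have hε : (0 : ℝ) < 1 / K := by positivity
  have hv' : ℓ' v + 1 / K ≤ ℓ v := add_le_of_lt_of_grid hε (hℓ'.2.1 v) (hℓ.2.1 v) hv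
  refine hshift (hℓ.update_sub hK (fun b hb => ?_) (fun u hu => ?_) (by linarith [hℓ'.2.2.2 v]))
  · refine abs_sub_one_div_sub_le_one_iff hK (hℓ.2.1 v) (hℓ.2.1 b) (fun hb₁ => ?_) (fun hb₂ => ?_)
    · have hadj : G.Adj v b := (hℓ.1 v b hb.symm).2 (by simp [hb₁])
      have := abs_le.1 ((hℓ'.1 v b hb.symm).1 hadj)
      exact hfree b (by linarith) (Or.inl hb₁)
    · have hnadj : ¬ G.Adj v b := fun h => by
        have := (hℓ.1 v b hb.symm).1 h
        rw [hb₂, abs_le] at this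
        linarith
      have hbv : lt b v := (hcomp v b (not_indist_of_not_adj hb.symm hnadj)).resolve_left
        fun h => by linarith [hℓ.2.2.1 v b h]
      have := mt (hℓ'.1 v b hb.symm).2 hnadj
      rw [not_le, abs_of_nonneg (by linarith [hℓ'.2.2.1 b v hbv])] at this
      exact hfree b (by linarith) (Or.inr (Or.inl hb₂))
  · refine (hℓ.2.2.1 u v hu).lt_of_ne fun huv => hfree u ?_ (Or.inr (Or.inr ⟨huv, hu⟩))
    linarith [hℓ'.2.2.1 u v hu]

lemma Function.exists_mem_periodicPts {α : Type*} [Finite α] (f : α → α) (x : α) :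
    ∃ y, y ∈ periodicPts f := by
  obtain ⟨i, j, hij, hfij⟩ := Finite.exists_ne_map_eq_of_infinite fun n : ℕ => f^[n] x
  wlog hlt : i < j generalizing i j
  · exact this j i hij.symm hfij.symm (by omega)
  refine ⟨f^[i] x, j - i, by omega, ?_⟩
  change f^[j - i] (f^[i] x) = f^[i] x
  rw [← iterate_add_apply, Nat.sub_add_cancel hlt.le]
  exact hfij.symm

lemma rel_of_forall_rel_succ {α : Type*} {r : α → α → Prop}
    (htrans : ∀ a b c, r a b → r b c → r a c) {c : ℕ → α} {m : ℕ} (hm : 0 < m)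
    (hc : ∀ t < m, r (c (t + 1)) (c t)) : r (c m) (c 0) := by
  induction m with
  | zero => omega
  | succ m ih =>
    rcases Nat.eq_zero_or_pos m with rfl | hm
    · exact hc 0 hm
    · exact htrans _ _ _ (hc m (by omega)) (ih hm fun t ht => hc t (by omega))

lemma eq_zero_of_sum_range_eq_zero_of_steps {K m : ℕ} (hm : m ≤ K) {d : ℕ → ℤ}
    (hd : ∀ t < m, d t = K ∨ d t = -(K + 1) ∨ d t = 0) (hsum : ∑ t ∈ range m, d t = 0) :
    ∀ t < m, d t = 0 := by
  classical
  set up := (range m).filter (fun t => 0 < d t)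
  -- counting each upward step once more makes every step a multiple of `K + 1`
  have hdvd : ((K + 1 : ℕ) : ℤ) ∣ (#up : ℕ) := by
    have : ∑ t ∈ range m, (d t + if 0 < d t then 1 else 0) = #up := by
      rw [sum_add_distrib, hsum, sum_boole, zero_add]
    rw [← this]
    refine dvd_sum fun t ht => ?_
    rcases hd t (mem_range.1 ht) with h | h | h
    · rcases K.eq_zero_or_pos with rfl | hK <;> simp [*]
    · rw [h, if_neg (by omega), add_zero, dvd_neg]
      push_cast
      exact dvd_rfl
    · simp [h]
  have hup : up = ∅ := card_eq_zero.1 <|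
    Nat.eq_zero_of_dvd_of_lt (Int.natCast_dvd_natCast.1 hdvd)
      ((card_filter_le _ _).trans_lt (by simpa using Nat.lt_succ_of_le hm))
  have hnonpos : ∀ t ∈ range m, d t ≤ 0 := fun t ht =>
    not_lt.1 fun h => ne_empty_of_mem (mem_filter.2 ⟨ht, h⟩ : t ∈ up) hup
  exact fun t ht => (sum_eq_zero_iff_of_nonpos hnonpos).1 hsum t (mem_range.2 ht)

lemma Blocks.int_sub {V : Type*} {lt : V → V → Prop} {K : ℕ} (hK : 0 < K) {ℓ : V → ℝ}
    {N : V → ℤ} (hN : ∀ v, ℓ v = N v * (1 / (K : ℝ))) {u v : V} (h : Blocks lt K ℓ u v) :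
    N u - N v = K ∨ N u - N v = -(K + 1) ∨ (N u - N v = 0 ∧ lt u v) := by
  have hcoord (z : ℤ) (hz : ℓ u - ℓ v = z * (1 / (K : ℝ))) : N u - N v = z := by
    rw [hN, hN, ← sub_mul] at hz
    exact_mod_cast mul_right_cancel₀ (by positivity) hz
  rcases h with h | h | ⟨h, huv⟩
  · exact Or.inl (hcoord K (by rw [h]; push_cast; field_simp; ring))
  · exact Or.inr (Or.inl (hcoord (-(K + 1)) (by rw [h]; push_cast; field_simp; ring)))
  · exact Or.inr (Or.inr ⟨hcoord 0 (by rw [h]; simp), huv⟩)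

lemma not_forall_exists_blocks {α : Type*} [Fintype α] [Nonempty α] {lt : α → α → Prop}
    (hirr : ∀ v, ¬ lt v v) (htrans : ∀ a b c, lt a b → lt b c → lt a c) {K : ℕ}
    (hcard : Fintype.card α ≤ K) {ℓ : α → ℝ} (hgrid : ∀ v, ∃ m : ℤ, ℓ v = m * (1 / (K : ℝ))) :
    ¬ ∀ v, ∃ u, Blocks lt K ℓ u v := by
  intro h
  have hK : 0 < K := Fintype.card_pos.trans_le hcard
  choose f hf using h
  choose N hN using hgrid
  obtain ⟨w, hw⟩ := exists_mem_periodicPts f (Classical.arbitrary α)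
  set m := minimalPeriod f w
  have hm : 0 < m := minimalPeriod_pos_of_mem_periodicPts hw
  set c : ℕ → α := fun t => f^[t] w
  have hcm : c m = c 0 := iterate_minimalPeriod
  have hstep (t : ℕ) : N (c (t + 1)) - N (c t) = K ∨ N (c (t + 1)) - N (c t) = -(K + 1) ∨
      (N (c (t + 1)) - N (c t) = 0 ∧ lt (c (t + 1)) (c t)) := by
    simpa only [c, iterate_succ_apply'] using (hf (c t)).int_sub hK hN
  have hsum : ∑ t ∈ range m, (N (c (t + 1)) - N (c t)) = 0 := by
    rw [sum_range_sub (fun t => N (c t)), hcm, sub_self]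
  have hzero := eq_zero_of_sum_range_eq_zero_of_steps (minimalPeriod_le_card.trans hcard)
    (fun t _ => (hstep t).imp_right (Or.imp_right And.left)) hsum
  have hlt (t : ℕ) (ht : t < m) : lt (c (t + 1)) (c t) := by
    have := hzero t ht
    rcases hstep t with h | h | h
    · omega
    · omega
    · exact h.2
  have hcycle := rel_of_forall_rel_succ htrans hm hlt
  rw [hcm] at hcycle
  exact hirr w hcycle

theorem stmt5_general {V : Type*} [Fintype V] [DecidableEq V] (G : SimpleGraph V)
    (lt : V → V → Prop)
    (hirr : ∀ v : V, ¬ lt v v)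
    (htrans : ∀ a b c : V, lt a b → lt b c → lt a c)
    (hcomp : ∀ u v : V, ¬ Indist G u v → lt u v ∨ lt v u)
    (K : ℕ) (hKn : Fintype.card V ≤ K) (lbound : V → ℝ)
    (ℓ : V → ℝ) (hℓ : GridRep G lt K lbound ℓ) :
    (∀ ℓ'' : V → ℝ, GridRep G lt K lbound ℓ'' → ∀ v : V, ℓ v ≤ ℓ'' v) ↔
      ¬ ∃ v : V, GridRep G lt K lbound (Function.update ℓ v (ℓ v - 1 / (K : ℝ))) := by
  classical
  have hK (v : V) : 0 < K := (Fintype.card_pos_iff.2 ⟨v⟩).trans_le hKn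
  constructor
  · rintro hmin ⟨v, hv⟩
    have := hmin _ hv v
    rw [update_self] at this
    have : (0 : ℝ) < 1 / K := by have := hK v; positivity
    linarith
  · intro hno ℓ'' hℓ''
    by_contra! ⟨v₀, hv₀⟩
    have : Nonempty {v // ℓ'' v < ℓ v} := ⟨⟨v₀, hv₀⟩⟩
    refine not_forall_exists_blocks (α := {v // ℓ'' v < ℓ v}) (lt := fun a b => lt a b)
      (fun v => hirr v) (fun a b c => htrans a b c) ((Fintype.card_subtype_le _).trans hKn)
      (fun v => hℓ.2.1 v)
      fun v => ?_
    obtain ⟨u, hu, hblocks⟩ :=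
      exists_blocks_of_not_gridRep_update hcomp (hK v₀) hℓ hℓ'' v.2 fun h => hno ⟨v, h⟩
    exact ⟨⟨u, hu⟩, hblocks⟩

/-- for `K ≥ n`, a representation in `Rep` is the left-most representation
iff no single interval can be shifted to the left by `ε` within `Rep`. -/
theorem stmt5 {V : Type*} [Fintype V] [DecidableEq V] (G : SimpleGraph V)
    (lt : V → V → Prop)
    (hirr : ∀ v : V, ¬ lt v v)
    (htrans : ∀ a b c : V, lt a b → lt b c → lt a c)
    (hcomp : ∀ u v : V, ¬ Indist G u v → lt u v ∨ lt v u)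
    (K : ℕ) (hK : 0 < K) (hKn : Fintype.card V ≤ K) (lbound : V → ℝ)
    (ℓ : V → ℝ) (hℓ : GridRep G lt K lbound ℓ) :
    (∀ ℓ'' : V → ℝ, GridRep G lt K lbound ℓ'' → ∀ v : V, ℓ v ≤ ℓ'' v) ↔
      ¬ ∃ v : V, GridRep G lt K lbound (Function.update ℓ v (ℓ v - 1 / (K : ℝ))) :=
  stmt5_general G lt hirr htrans hcomp K hKn lbound ℓ hℓ
end

section
/- Assume 2K ≥ n where n = |V|. Then for every ℓ ∈ Rep, the obstruction digraph H of ℓ is acyclic: there is no vertex v with a nonempty directed path in H from v back to v. -/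
/-- `w` is an obstruction of `v`: either a left-obstruction (`w < v`, non-adjacent,
and `ℓ w + 1 + ε = ℓ v`) or a right-obstruction (`v < w`, adjacent, `ℓ v + 1 = ℓ w`). -/
def Obstruction {V : Type*} (G : SimpleGraph V) (lt : V → V → Prop) (K : ℕ)
    (ℓ : V → ℝ) (v w : V) : Prop :=
  (lt w v ∧ ¬ G.Adj v w ∧ ℓ w + 1 + 1 / (K : ℝ) = ℓ v) ∨
  (lt v w ∧ G.Adj v w ∧ ℓ v + 1 = ℓ w)

/-!
Write `ℓ v = m v / K` with `m v ∈ ℤ`. A left-obstruction edge lowers `m` by `K + 1` and a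
right-obstruction edge raises it by `K`; modulo `2K + 1` both steps are the same, and
`-2 K ≡ 1`, so `-2 m` is a `ZMod (2K + 1)`-valued potential increasing by exactly one along
every edge.
Since `n ≤ 2K < 2K + 1`, some residue is missed, and cutting the cycle `ZMod (2K + 1)` open
there yields an `ℕ`-valued potential strictly increasing along edges, so there is no cycle.
-/

open Relation

theorem ZMod.val_add_one_of_ne_neg_one {N : ℕ} [NeZero N] {y : ZMod N} (hy : y ≠ -1) :
    (y + 1).val = y.val + 1 := by
  have hcast : y + 1 = ((y.val + 1 : ℕ) : ZMod N) := by
    push_cast [ZMod.natCast_zmod_val]; rfl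
  have hlt : y.val + 1 < N := by
    refine lt_of_le_of_ne (ZMod.val_lt y) fun hN => hy ?_
    rw [eq_neg_iff_add_eq_zero, hcast, hN, ZMod.natCast_self]
  rw [hcast, ZMod.val_natCast, Nat.mod_eq_of_lt hlt]

theorem Relation.not_transGen_self_of_potential {α : Type*} {r : α → α → Prop} (g : α → ℕ)
    (hg : ∀ a b, r a b → g a < g b) (a : α) : ¬ TransGen r a a := fun h =>
  lt_irrefl (g a) (by simpa only [transGen_eq_self] using TransGen.lift g hg a a h)

theorem Relation.not_transGen_self_of_zmod_potential {α : Type*} {r : α → α → Prop} {N : ℕ}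
    [NeZero N] (f : α → ZMod N) (hf : ∀ a b, r a b → f b = f a + 1) {c : ZMod N}
    (hc : c ∉ Set.range f) (a : α) : ¬ TransGen r a a := by
  refine not_transGen_self_of_potential (fun x => (f x - c - 1).val) (fun a b hab => ?_) a
  have hne : f a - c - 1 ≠ -1 := fun h => hc ⟨a, by linear_combination h⟩
  have hstep : f b - c - 1 = f a - c - 1 + 1 := by rw [hf a b hab]; ring
  simp only [hstep, ZMod.val_add_one_of_ne_neg_one hne, Nat.lt_succ_self]

theorem Obstruction.grid_step {V : Type*} {G : SimpleGraph V} {lt : V → V → Prop} {K : ℕ}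
    (hK : 0 < K) {ℓ : V → ℝ} {m : V → ℤ} (hm : ∀ v, ℓ v = m v * (1 / (K : ℝ))) {v w : V}
    (h : Obstruction G lt K ℓ v w) : m w = m v + K ∨ m w = m v - (K + 1) := by
  have hKR : (K : ℝ) ≠ 0 := by positivity
  rcases h with ⟨-, -, h⟩ | ⟨-, -, h⟩
  · right
    rw [hm, hm] at h
    field_simp at h
    exact_mod_cast (by linarith : (m w : ℝ) = m v - (K + 1))
  · left
    rw [hm, hm] at h
    field_simp at h
    exact_mod_cast (by linarith : (m w : ℝ) = m v + K)

theorem Obstruction.zmod_step {V : Type*} {G : SimpleGraph V} {lt : V → V → Prop} {K : ℕ}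
    (hK : 0 < K) {ℓ : V → ℝ} {m : V → ℤ} (hm : ∀ v, ℓ v = m v * (1 / (K : ℝ))) {v w : V}
    (h : Obstruction G lt K ℓ v w) :
    -2 * (m w : ZMod (2 * K + 1)) = -2 * (m v : ZMod (2 * K + 1)) + 1 := by
  have hN : ((2 * K + 1 : ℕ) : ZMod (2 * K + 1)) = 0 := ZMod.natCast_self _
  push_cast at hN
  rcases h.grid_step hK hm with hw | hw <;> rw [hw] <;> push_cast
  · linear_combination -hN
  · linear_combination hN

theorem stmt7_general {V : Type*} [Fintype V] (G : SimpleGraph V) (lt : V → V → Prop)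
    (K : ℕ) (hK : 0 < K) (h2K : Fintype.card V ≤ 2 * K) (lbound : V → ℝ)
    (ℓ : V → ℝ) (hℓ : GridRep G lt K lbound ℓ) :
    ∀ v : V, ¬ Relation.TransGen (Obstruction G lt K ℓ) v v := by
  choose m hm using hℓ.2.1
  set f : V → ZMod (2 * K + 1) := fun v => -2 * (m v : ZMod (2 * K + 1))
  have hmiss : ¬ Function.Surjective f := fun hsurj => by
    have := Fintype.card_le_of_surjective f hsurj
    rw [ZMod.card] at this
    omega
  obtain ⟨c, hc⟩ := not_forall.mp hmiss
  exact not_transGen_self_of_zmod_potential f (fun v w h => h.zmod_step hK hm) hc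

/-- if `2K ≥ n`, the obstruction digraph of any `ℓ ∈ Rep` is acyclic. -/
theorem stmt7 {V : Type*} [Fintype V] (G : SimpleGraph V) (lt : V → V → Prop)
    (hirr : ∀ v : V, ¬ lt v v)
    (htrans : ∀ a b c : V, lt a b → lt b c → lt a c)
    (hcomp : ∀ u v : V, ¬ Indist G u v → lt u v ∨ lt v u)
    (K : ℕ) (hK : 0 < K) (h2K : Fintype.card V ≤ 2 * K) (lbound : V → ℝ)
    (ℓ : V → ℝ) (hℓ : GridRep G lt K lbound ℓ) :
    ∀ v : V, ¬ Relation.TransGen (Obstruction G lt K ℓ) v v :=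
  stmt7_general G lt K hK h2K lbound ℓ hℓ
end

section
/- For every positive integer K with ε = 1/K, let G be the graph on the 2K+1 vertices v_0, …, v_{K−1}, w_0, …, w_K in which {v_0, …, v_{K−1}} is a clique, {w_0, …, w_K} is a clique, and v_i is adjacent to w_j if and only if j ≤ i; let < be the linear order v_0 < v_1 < ⋯ < v_{K−1} < w_0 < w_1 < ⋯ < w_K. Then the assignment ℓ(v_i) = i·ε and ℓ(w_i) = 1 + i·ε is an ε-grid unit interval representation of G respecting < (ℓ(u) ≤ ℓ(v) whenever u < v), and the obstruction digraph of ℓ contains a directed cycle, namely w_K → v_{K−1} → w_{K−1} → v_{K−2} → w_{K−2} → ⋯ → v_0 → w_0 → w_K. -/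
/-- The vertex set of the counterexample graph: `v_0, …, v_{K-1}` and `w_0, …, w_K`. -/
abbrev CexV (K : ℕ) := Fin K ⊕ Fin (K + 1)

/-- The counterexample graph: `{v_0, …, v_{K-1}}` and `{w_0, …, w_K}` are cliques, and
`v_i` is adjacent to `w_j` iff `j ≤ i`. -/
def cexG (K : ℕ) : SimpleGraph (CexV K) :=
  SimpleGraph.fromRel (fun a b =>
    match a, b with
    | Sum.inl _, Sum.inl _ => True
    | Sum.inr _, Sum.inr _ => True
    | Sum.inl i, Sum.inr j => (j : ℕ) ≤ (i : ℕ)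
    | Sum.inr j, Sum.inl i => (j : ℕ) ≤ (i : ℕ))

/-- The linear order `v_0 < ⋯ < v_{K-1} < w_0 < ⋯ < w_K`. -/
def cexLT (K : ℕ) : CexV K → CexV K → Prop
  | Sum.inl i, Sum.inl i' => i < i'
  | Sum.inl _, Sum.inr _ => True
  | Sum.inr _, Sum.inl _ => False
  | Sum.inr j, Sum.inr j' => j < j'

/-- The representation `ℓ(v_i) = i·ε`, `ℓ(w_j) = 1 + j·ε`. -/
noncomputable def cexRep (K : ℕ) : CexV K → ℝ
  | Sum.inl i => (i : ℝ) * (1 / (K : ℝ))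
  | Sum.inr j => 1 + (j : ℝ) * (1 / (K : ℝ))

/-- `cexRep` is an `ε`-grid unit interval representation of `cexG`
respecting the order `cexLT`, and its obstruction digraph contains the directed cycle
`w_K → v_{K-1} → w_{K-1} → ⋯ → v_0 → w_0 → w_K`. -/
theorem stmt8 (K : ℕ) (hK : 0 < K) :
    IsUIRep (cexG K) (cexRep K) ∧
    (∀ v : CexV K, ∃ m : ℤ, cexRep K v = m * (1 / (K : ℝ))) ∧
    (∀ u v : CexV K, cexLT K u v → cexRep K u ≤ cexRep K v) ∧
    (∀ i : Fin K,
      Obstruction (cexG K) (cexLT K) K (cexRep K) (Sum.inr i.succ) (Sum.inl i)) ∧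
    (∀ i : Fin K,
      Obstruction (cexG K) (cexLT K) K (cexRep K) (Sum.inl i) (Sum.inr i.castSucc)) ∧
    Obstruction (cexG K) (cexLT K) K (cexRep K) (Sum.inr 0) (Sum.inr (Fin.last K)) ∧
    Relation.TransGen (Obstruction (cexG K) (cexLT K) K (cexRep K))
      (Sum.inr (Fin.last K)) (Sum.inr (Fin.last K)) := by
  have Kpos : (0:ℝ) < K := Nat.cast_pos.mpr hK
  have hKne : (K:ℝ) ≠ 0 := ne_of_gt Kpos
  have epos : (0:ℝ) < 1 / (K:ℝ) := by positivity
  have hKe : (K:ℝ) * (1/(K:ℝ)) = 1 := by field_simp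
  have adj_ll : ∀ i i' : Fin K, (cexG K).Adj (Sum.inl i) (Sum.inl i') ↔ i ≠ i' := by
    intro i i'; simp [cexG, SimpleGraph.fromRel_adj]
  have adj_rr : ∀ j j' : Fin (K+1), (cexG K).Adj (Sum.inr j) (Sum.inr j') ↔ j ≠ j' := by
    intro j j'; simp [cexG, SimpleGraph.fromRel_adj]
  have adj_lr : ∀ (i : Fin K) (j : Fin (K+1)),
      (cexG K).Adj (Sum.inl i) (Sum.inr j) ↔ (j:ℕ) ≤ i := by
    intro i j; simp [cexG, SimpleGraph.fromRel_adj]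
  have obs1 : ∀ i : Fin K,
      Obstruction (cexG K) (cexLT K) K (cexRep K) (Sum.inr i.succ) (Sum.inl i) := by
    intro i
    left
    refine ⟨trivial, ?_, ?_⟩
    · rw [(cexG K).adj_comm, adj_lr]
      simp [Fin.val_succ]
    · show (i:ℝ) * (1/(K:ℝ)) + 1 + 1/(K:ℝ) = 1 + (i.succ : ℝ) * (1/(K:ℝ))
      rw [Fin.val_succ]
      push_cast
      ring
  have obs2 : ∀ i : Fin K,
      Obstruction (cexG K) (cexLT K) K (cexRep K) (Sum.inl i) (Sum.inr i.castSucc) := by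
    intro i
    right
    refine ⟨trivial, ?_, ?_⟩
    · rw [adj_lr]; simp
    · show (i:ℝ) * (1/(K:ℝ)) + 1 = 1 + (i.castSucc : ℝ) * (1/(K:ℝ))
      simp [Fin.coe_castSucc]; ring
  have obs3 : Obstruction (cexG K) (cexLT K) K (cexRep K)
      (Sum.inr 0) (Sum.inr (Fin.last K)) := by
    right
    refine ⟨?_, ?_, ?_⟩
    · show (0 : Fin (K+1)) < Fin.last K
      simpa [Fin.lt_def] using hK
    · rw [adj_rr]
      simp only [ne_eq, Fin.ext_iff, Fin.val_last, Fin.val_zero]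
      omega
    · show 1 + ((0 : Fin (K+1)) : ℝ) * (1/(K:ℝ)) + 1 = 1 + ((Fin.last K : Fin (K+1)) : ℝ) * (1/(K:ℝ))
      simp only [Fin.val_zero, Fin.val_last, Nat.cast_zero, zero_mul, add_zero]
      rw [hKe]
  refine ⟨?_, ?_, ?_, obs1, obs2, obs3, ?_⟩
  · -- IsUIRep
    intro u v huv
    have bound : ∀ a b : ℕ, a < K + 1 → b < K + 1 →
        |((a:ℝ) * (1/(K:ℝ))) - ((b:ℝ) * (1/(K:ℝ)))| ≤ 1 := by
      intro a b ha hb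
      have haR : (a:ℝ) ≤ K := Nat.cast_le.mpr (Nat.lt_succ_iff.mp ha)
      have hbR : (b:ℝ) ≤ K := Nat.cast_le.mpr (Nat.lt_succ_iff.mp hb)
      have ha0 : (0:ℝ) ≤ a := Nat.cast_nonneg a
      have hb0 : (0:ℝ) ≤ b := Nat.cast_nonneg b
      rw [abs_sub_le_iff]
      constructor <;> nlinarith [hKe, epos.le]
    match u, v with
    | Sum.inl i, Sum.inl i' =>
      rw [adj_ll]
      constructor
      · intro _
        exact bound i i' (Nat.lt_succ_of_lt i.isLt) (Nat.lt_succ_of_lt i'.isLt)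
      · intro _; simpa using huv
    | Sum.inr j, Sum.inr j' =>
      rw [adj_rr]
      constructor
      · intro _
        show |1 + (j:ℝ) * (1/(K:ℝ)) - (1 + (j':ℝ) * (1/(K:ℝ)))| ≤ 1
        have h := bound j j' j.isLt j'.isLt
        rw [show (1 + (j:ℝ) * (1/(K:ℝ)) - (1 + (j':ℝ) * (1/(K:ℝ))))
            = (j:ℝ) * (1/(K:ℝ)) - (j':ℝ) * (1/(K:ℝ)) by ring]
        exact h
      · intro _; simpa using huv
    | Sum.inl i, Sum.inr j =>
      rw [adj_lr]
      show (j:ℕ) ≤ i ↔ |(i:ℝ) * (1/(K:ℝ)) - (1 + (j:ℝ) * (1/(K:ℝ)))| ≤ 1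
      have hi : ((i:ℕ):ℝ) < K := Nat.cast_lt.mpr i.isLt
      have key : (i:ℝ) * (1/(K:ℝ)) - (1 + (j:ℝ) * (1/(K:ℝ)))
          = -(1 + ((j:ℝ) - (i:ℝ)) * (1/(K:ℝ))) := by ring
      constructor
      · intro h
        have hji : ((j:ℕ):ℝ) ≤ i := Nat.cast_le.mpr h
        rw [key, abs_neg, abs_of_nonneg (by nlinarith)]
        nlinarith
      · intro h
        by_contra hc
        push_neg at hc
        have h1 : (i:ℕ) + 1 ≤ (j:ℕ) := hc
        have : ((i:ℕ):ℝ) + 1 ≤ j := by exact_mod_cast h1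
        rw [key, abs_neg, abs_of_nonneg (by nlinarith)] at h
        nlinarith
    | Sum.inr j, Sum.inl i =>
      rw [(cexG K).adj_comm, adj_lr]
      show (j:ℕ) ≤ i ↔ |(1 + (j:ℝ) * (1/(K:ℝ))) - (i:ℝ) * (1/(K:ℝ))| ≤ 1
      have hi : ((i:ℕ):ℝ) < K := Nat.cast_lt.mpr i.isLt
      have key : (1 + (j:ℝ) * (1/(K:ℝ))) - (i:ℝ) * (1/(K:ℝ))
          = 1 + ((j:ℝ) - (i:ℝ)) * (1/(K:ℝ)) := by ring
      constructor
      · intro h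
        have hji : ((j:ℕ):ℝ) ≤ i := Nat.cast_le.mpr h
        rw [key, abs_of_nonneg (by nlinarith)]
        nlinarith
      · intro h
        by_contra hc
        push_neg at hc
        have h1 : (i:ℕ) + 1 ≤ (j:ℕ) := hc
        have : ((i:ℕ):ℝ) + 1 ≤ j := by exact_mod_cast h1
        rw [key, abs_of_nonneg (by nlinarith)] at h
        nlinarith
  · -- grid
    intro v
    match v with
    | Sum.inl i => exact ⟨(i:ℤ), by push_cast [cexRep]; ring⟩
    | Sum.inr j =>
      refine ⟨(K:ℤ) + j, ?_⟩
      show 1 + (j:ℝ) * (1/(K:ℝ)) = _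
      push_cast
      field_simp
  · -- monotone
    intro u v huv
    match u, v with
    | Sum.inl i, Sum.inl i' =>
      have : (i:ℕ) < i' := huv
      show (i:ℝ) * (1/(K:ℝ)) ≤ (i':ℝ) * (1/(K:ℝ))
      have : ((i:ℕ):ℝ) ≤ i' := Nat.cast_le.mpr this.le
      nlinarith
    | Sum.inl i, Sum.inr j =>
      show (i:ℝ) * (1/(K:ℝ)) ≤ 1 + (j:ℝ) * (1/(K:ℝ))
      have hi : ((i:ℕ):ℝ) ≤ K := (Nat.cast_le.mpr i.isLt.le)
      have hj : (0:ℝ) ≤ (j:ℕ) := Nat.cast_nonneg _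
      nlinarith
    | Sum.inr j, Sum.inl i => exact absurd huv (by simp [cexLT])
    | Sum.inr j, Sum.inr j' =>
      have : (j:ℕ) < j' := huv
      show 1 + (j:ℝ) * (1/(K:ℝ)) ≤ 1 + (j':ℝ) * (1/(K:ℝ))
      have : ((j:ℕ):ℝ) ≤ j' := Nat.cast_le.mpr this.le
      nlinarith
  · -- the cycle
    have step : ∀ n : ℕ, ∀ hn : n ≤ K,
        Relation.TransGen (Obstruction (cexG K) (cexLT K) K (cexRep K))
          (Sum.inr (⟨n, Nat.lt_succ_of_le hn⟩ : Fin (K+1))) (Sum.inr (Fin.last K)) := by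
      intro n
      induction n with
      | zero =>
        intro _
        exact Relation.TransGen.single obs3
      | succ m ih =>
        intro hm
        have hmK : m < K := hm
        have e1 : (⟨m+1, Nat.lt_succ_of_le hm⟩ : Fin (K+1)) = (⟨m, hmK⟩ : Fin K).succ := rfl
        have e2 : (⟨m, Nat.lt_succ_of_le (Nat.le_of_lt hmK)⟩ : Fin (K+1))
            = (⟨m, hmK⟩ : Fin K).castSucc := rfl
        rw [e1]
        exact Relation.TransGen.head (obs1 ⟨m, hmK⟩)
          (Relation.TransGen.head (obs2 ⟨m, hmK⟩) (by rw [← e2]; exact ih (le_of_lt hmK)))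
    have := step K le_rfl
    simpa [Fin.last] using this
end

section
/- For every class Γ_t and every vertex v_i ∈ Γ_t, the value ℓ(v_i) defined by the placing formula satisfies ℓ'(γ_t) − 1 ≤ ℓ(v_i) ≤ ℓ'(γ_t). -/
/-- The pruned graph on the indistinguishability classes `Γ 0 < Γ 1 < ⋯ < Γ (k-1)`:
two distinct classes are adjacent iff their vertices are adjacent in `G`. -/
def pruned {V : Type*} (G : SimpleGraph V) {k : ℕ} (Γ : Fin k → Set V) :
    SimpleGraph (Fin k) where
  Adj i j := i ≠ j ∧ ∃ u ∈ Γ i, ∃ w ∈ Γ j, G.Adj u w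
  symm := ⟨by
    rintro i j ⟨hij, u, hu, w, hw, h⟩
    exact ⟨hij.symm, w, hw, u, hu, h.symm⟩⟩
  loopless := ⟨by rintro i ⟨hii, -⟩; exact hii rfl⟩

/-- `PlacingValue G' K ℓ' lb t x`: `x` is the value assigned by the placing formula
`x = max {lb, ℓ'(γ^t_←) + 1 + ε, ℓ'(γ^t_→) - 1}` to a vertex of the class `Γ t` with
lower bound `lb`, where `γ^t_←` is the largest class preceding `t` and non-adjacent to
`t` (the corresponding term being omitted if no such class exists) and `γ^t_→` is the
largest class adjacent to `t` (possibly `t` itself). -/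
def PlacingValue {k : ℕ} (G' : SimpleGraph (Fin k)) (K : ℕ) (ℓ' : Fin k → ℝ)
    (lb : ℝ) (t : Fin k) (x : ℝ) : Prop :=
  ∃ rA : Fin k, ((rA = t ∨ G'.Adj t rA) ∧ ∀ s : Fin k, (s = t ∨ G'.Adj t s) → s ≤ rA) ∧
    ((∃ lA : Fin k, (lA < t ∧ ¬ G'.Adj lA t ∧ ∀ s : Fin k, s < t → ¬ G'.Adj s t → s ≤ lA) ∧
        x = max (max lb (ℓ' lA + 1 + 1 / (K : ℝ))) (ℓ' rA - 1)) ∨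
      ((∀ s : Fin k, s < t → G'.Adj s t) ∧ x = max lb (ℓ' rA - 1)))

theorem IsUIRep.abs_sub_le_one_of_adj {V : Type*} {G : SimpleGraph V} {ℓ : V → ℝ}
    (hℓ : IsUIRep G ℓ) {u v : V} (h : G.Adj u v) : |ℓ u - ℓ v| ≤ 1 :=
  (hℓ u v h.ne).1 h

theorem IsUIRep.one_lt_abs_sub_of_not_adj {V : Type*} {G : SimpleGraph V} {ℓ : V → ℝ}
    (hℓ : IsUIRep G ℓ) {u v : V} (huv : u ≠ v) (h : ¬ G.Adj u v) : 1 < |ℓ u - ℓ v| :=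
  lt_of_not_ge fun h' => h ((hℓ u v huv).2 h')

theorem add_one_mem_grid {K : ℕ} (hK : 0 < K) {a : ℝ} (ha : ∃ m : ℤ, a = m * (1 / (K : ℝ))) :
    ∃ m : ℤ, a + 1 = m * (1 / (K : ℝ)) := by
  obtain ⟨m, rfl⟩ := ha
  refine ⟨m + K, ?_⟩
  have hK' : (K : ℝ) ≠ 0 := by positivity
  push_cast
  field_simp

theorem add_inv_le_of_lt_of_mem_grid {K : ℕ} (hK : 0 < K) {a b : ℝ}
    (ha : ∃ m : ℤ, a = m * (1 / (K : ℝ))) (hb : ∃ n : ℤ, b = n * (1 / (K : ℝ))) (hab : a < b) :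
    a + 1 / K ≤ b := by
  obtain ⟨m, rfl⟩ := ha
  obtain ⟨n, rfl⟩ := hb
  have hK' : (0 : ℝ) < 1 / K := by positivity
  have hmn : m + 1 ≤ n := by exact_mod_cast (lt_of_mul_lt_mul_right hab hK'.le)
  calc (m : ℝ) * (1 / K) + 1 / K = ((m + 1 : ℤ) : ℝ) * (1 / K) := by push_cast; ring
    _ ≤ n * (1 / K) := by gcongr

theorem PlacingValue.sub_one_le_and_le {k : ℕ} {G' : SimpleGraph (Fin k)} {K : ℕ} (hK : 0 < K)
    {ℓ' : Fin k → ℝ} (hrep : IsUIRep G' ℓ') (hgrid : ∀ i, ∃ m : ℤ, ℓ' i = m * (1 / (K : ℝ)))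
    (hmono : Monotone ℓ') {lb : ℝ} {t : Fin k} (hlb : lb ≤ ℓ' t) {x : ℝ}
    (hx : PlacingValue G' K ℓ' lb t x) : ℓ' t - 1 ≤ x ∧ x ≤ ℓ' t := by
  obtain ⟨rA, ⟨hrA, hrA_max⟩, hcase⟩ := hx
  have hrA_ge : ℓ' t ≤ ℓ' rA := hmono (hrA_max t (Or.inl rfl))
  have hrA_le : ℓ' rA - 1 ≤ ℓ' t := by
    rcases hrA with rfl | hadj
    · linarith
    · linarith [(abs_le.1 (hrep.abs_sub_le_one_of_adj hadj)).1]
  rcases hcase with ⟨lA, ⟨hlA, hnadj, -⟩, rfl⟩ | ⟨-, rfl⟩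
  · have hfar : ℓ' lA + 1 < ℓ' t := by
      have h := hrep.one_lt_abs_sub_of_not_adj hlA.ne hnadj
      rw [abs_sub_comm, abs_of_nonneg (sub_nonneg.2 (hmono hlA.le))] at h
      linarith
    have hlA_le := add_inv_le_of_lt_of_mem_grid hK (add_one_mem_grid hK (hgrid lA)) (hgrid t) hfar
    exact ⟨by linarith [le_max_right (max lb (ℓ' lA + 1 + 1 / (K : ℝ))) (ℓ' rA - 1)],
      max_le (max_le hlb hlA_le) hrA_le⟩
  · exact ⟨by linarith [le_max_right lb (ℓ' rA - 1)], max_le hlb hrA_le⟩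

theorem stmt10_general {V : Type*} (G : SimpleGraph V)
    (K : ℕ) (hK : 0 < K) (lbound : V → ℝ)
    (k : ℕ) (Γ : Fin k → Set V)
    (lbound' : Fin k → ℝ)
    (hlb' : ∀ i : Fin k, IsGreatest (lbound '' Γ i) (lbound' i))
    (ℓ' : Fin k → ℝ) (hℓ' : GridRep (pruned G Γ) (· < ·) K lbound' ℓ')
    (t : Fin k) (v : V) (hv : v ∈ Γ t) (x : ℝ)
    (hx : PlacingValue (pruned G Γ) K ℓ' (lbound v) t x) :
    ℓ' t - 1 ≤ x ∧ x ≤ ℓ' t := by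
  obtain ⟨hrep, hgrid, hmono, hlb⟩ := hℓ'
  have hv_lb : lbound v ≤ ℓ' t := ((hlb' t).2 ⟨v, hv, rfl⟩).trans (hlb t)
  exact hx.sub_one_le_and_le hK hrep hgrid (monotone_iff_forall_lt.2 hmono) hv_lb

/-- the placing formula puts every vertex of the class `Γ t` between
`ℓ'(γ_t) - 1` and `ℓ'(γ_t)`. -/
theorem stmt10 {V : Type*} [Fintype V] (G : SimpleGraph V)
    (hconn : G.Connected) (hUI : ∃ ℓ₀ : V → ℝ, IsUIRep G ℓ₀)
    (lt : V → V → Prop)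
    (hirr : ∀ v : V, ¬ lt v v)
    (htrans : ∀ a b c : V, lt a b → lt b c → lt a c)
    (hinc : ∀ u v : V, u ≠ v → (Indist G u v ↔ ¬ lt u v ∧ ¬ lt v u))
    (K : ℕ) (hK : 0 < K) (lbound : V → ℝ)
    (k : ℕ) (Γ : Fin k → Set V)
    (hne : ∀ i : Fin k, (Γ i).Nonempty)
    (hcover : ∀ v : V, ∃ i : Fin k, v ∈ Γ i)
    (hclass : ∀ i : Fin k, ∀ u ∈ Γ i, ∀ v : V, v ∈ Γ i ↔ Indist G u v)
    (horder : ∀ i j : Fin k, i < j → ∀ u ∈ Γ i, ∀ v ∈ Γ j, lt u v)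
    (lbound' : Fin k → ℝ)
    (hlb' : ∀ i : Fin k, IsGreatest (lbound '' Γ i) (lbound' i))
    (ℓ' : Fin k → ℝ) (hℓ' : GridRep (pruned G Γ) (· < ·) K lbound' ℓ')
    (t : Fin k) (v : V) (hv : v ∈ Γ t) (x : ℝ)
    (hx : PlacingValue (pruned G Γ) K ℓ' (lbound v) t x) :
    ℓ' t - 1 ≤ x ∧ x ≤ ℓ' t :=
  stmt10_general G K hK lbound k Γ lbound' hlb' ℓ' hℓ' t v hv x hx
end

section
/- Assume K ≥ n where n = |V|, and assume G admits some unit interval representation ℓ₀ with ℓ₀(u) ≤ ℓ₀(v) whenever u < v. Then for every lbound : V → ℝ, the set Rep(G, <, ε, lbound) is nonempty. -/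
/-!
Write a real as `⌊x⌋ + fract x`. For reals `x, y` and an integer `k`, the comparison
`x ≤ y + k` is the lexicographic comparison of `(⌊x⌋, fract x)` with `(⌊y⌋ + k, fract y)`.
So if each of the at most `n ≤ K` fractional parts `fract (ℓ₀ v)` is replaced by `r / K`,
where `r` is its rank among them, every comparison `ℓ₀ u ≤ ℓ₀ v` and `ℓ₀ u ≤ ℓ₀ v + 1` is
kept, hence so is the graph, and the new points lie on the `1/K`-grid. The lower bounds are
met by translating `ℓ₀` far enough to the right beforehand.
-/

open Finset

noncomputable def gridRound (K : ℕ) (S : Finset ℝ) (x : ℝ) : ℝ :=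
  ⌊x⌋ + (#{s ∈ S | s < Int.fract x} : ℝ) / K

section GridRound

variable {K : ℕ} {S : Finset ℝ}

lemma card_filter_lt_lt_card {f : ℝ} (hf : f ∈ S) : #{s ∈ S | s < f} < #S :=
  card_lt_card (filter_ssubset.2 ⟨f, hf, lt_irrefl f⟩)

lemma natCast_pos_of_card_le (hS : #S ≤ K) {f : ℝ} (hf : f ∈ S) : (0 : ℝ) < K := by
  exact_mod_cast (card_pos.2 ⟨f, hf⟩).trans_le hS

lemma strictMonoOn_card_filter_lt : StrictMonoOn (fun f => #{s ∈ S | s < f}) S := by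
  intro f hf g _ hfg
  refine card_lt_card ((ssubset_iff_of_subset ?_).2 ⟨f, ?_, ?_⟩)
  · intro s hs
    rw [mem_filter] at hs ⊢
    exact ⟨hs.1, hs.2.trans hfg⟩
  · simpa [hfg] using hf
  · simp

lemma gridRound_add_intCast (x : ℝ) (k : ℤ) :
    gridRound K S (x + k) = gridRound K S x + k := by
  simp only [gridRound, Int.floor_add_intCast, Int.fract_add_intCast]
  push_cast
  ring

lemma floor_le_gridRound (x : ℝ) : (⌊x⌋ : ℝ) ≤ gridRound K S x :=
  le_add_of_nonneg_right (by positivity)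

lemma gridRound_lt_floor_add_one (hS : #S ≤ K) {x : ℝ} (hx : Int.fract x ∈ S) :
    gridRound K S x < ⌊x⌋ + 1 := by
  rw [gridRound, add_lt_add_iff_left, div_lt_one (natCast_pos_of_card_le hS hx)]
  exact_mod_cast (card_filter_lt_lt_card hx).trans_le hS

lemma strictMonoOn_gridRound (hS : #S ≤ K) :
    StrictMonoOn (gridRound K S) {x | Int.fract x ∈ S} := by
  intro x hx y hy hxy
  rcases (Int.floor_mono hxy.le).lt_or_eq with hfloor | hfloor
  · calc gridRound K S x < ⌊x⌋ + 1 := gridRound_lt_floor_add_one hS hx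
      _ ≤ ⌊y⌋ := by exact_mod_cast hfloor
      _ ≤ gridRound K S y := floor_le_gridRound y
  · have hfract : Int.fract x < Int.fract y := by
      rw [Int.fract, Int.fract, hfloor]
      linarith
    have hrank := strictMonoOn_card_filter_lt hx hy hfract
    have hK := natCast_pos_of_card_le hS hx
    rw [gridRound, gridRound, hfloor]
    gcongr

lemma gridRound_le_gridRound_add_intCast_iff (hS : #S ≤ K) {x y : ℝ} (hx : Int.fract x ∈ S)
    (hy : Int.fract y ∈ S) (k : ℤ) :
    gridRound K S x ≤ gridRound K S y + k ↔ x ≤ y + k := by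
  rw [← gridRound_add_intCast]
  exact (strictMonoOn_gridRound hS).le_iff_le hx (by simpa using hy)

lemma exists_gridRound_eq_intCast_mul (hK : K ≠ 0) (x : ℝ) :
    ∃ m : ℤ, gridRound K S x = m * (1 / K) :=
  ⟨⌊x⌋ * K + #{s ∈ S | s < Int.fract x}, by rw [gridRound]; push_cast; field_simp⟩

end GridRound

namespace IsUIRep

variable {V : Type*} {G : SimpleGraph V} {ℓ : V → ℝ}

lemma add_const (hℓ : IsUIRep G ℓ) (c : ℝ) : IsUIRep G (fun v => ℓ v + c) := by
  intro u v huv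
  rw [add_sub_add_right_eq_sub]
  exact hℓ u v huv

lemma comp (hℓ : IsUIRep G ℓ) {f : ℝ → ℝ}
    (hf : ∀ u v, f (ℓ u) ≤ f (ℓ v) + 1 ↔ ℓ u ≤ ℓ v + 1) : IsUIRep G (f ∘ ℓ) := by
  intro u v huv
  simp only [hℓ u v huv, Function.comp_apply, abs_sub_le_iff, sub_le_iff_le_add', hf]

theorem exists_grid_of_card_le [Fintype V] (hℓ : IsUIRep G ℓ) {K : ℕ}
    (hK : Fintype.card V ≤ K) :
    ∃ ℓ' : V → ℝ, IsUIRep G ℓ' ∧ (∀ v, ∃ m : ℤ, ℓ' v = m * (1 / K)) ∧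
      (∀ u v, ℓ u ≤ ℓ v → ℓ' u ≤ ℓ' v) ∧ ∀ v, ℓ v - 1 < ℓ' v := by
  set S := univ.image fun v => Int.fract (ℓ v)
  have hS : #S ≤ K := card_image_le.trans hK
  have hmem : ∀ v, Int.fract (ℓ v) ∈ S := fun v => mem_image_of_mem _ (mem_univ v)
  refine ⟨gridRound K S ∘ ℓ, hℓ.comp fun u v => ?_, fun v => ?_, fun u v huv => ?_, fun v => ?_⟩
  · exact_mod_cast gridRound_le_gridRound_add_intCast_iff hS (hmem u) (hmem v) 1
  · exact exists_gridRound_eq_intCast_mul ((Fintype.card_pos_iff.2 ⟨v⟩).trans_le hK).ne' _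
  · exact (strictMonoOn_gridRound hS).le_iff_le (hmem u) (hmem v) |>.2 huv
  · exact (Int.sub_one_lt_floor _).trans_le (floor_le_gridRound _)

end IsUIRep

theorem stmt13_general {V : Type*} [Fintype V] (G : SimpleGraph V) (lt : V → V → Prop)
    (K : ℕ) (hKn : Fintype.card V ≤ K)
    (h : ∃ ℓ₀ : V → ℝ, IsUIRep G ℓ₀ ∧ ∀ u v : V, lt u v → ℓ₀ u ≤ ℓ₀ v)
    (lbound : V → ℝ) :
    ∃ ℓ : V → ℝ, GridRep G lt K lbound ℓ := by
  obtain ⟨ℓ₀, hrep, hmono⟩ := h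
  obtain ⟨c, hc⟩ := Finite.exists_le fun v => lbound v - ℓ₀ v + 1
  obtain ⟨ℓ, hℓ, hgrid, hℓmono, hℓlow⟩ := (hrep.add_const c).exists_grid_of_card_le hKn
  refine ⟨ℓ, hℓ, hgrid, fun u v huv => hℓmono u v (by simpa using hmono u v huv), fun v => ?_⟩
  linarith [hc v, hℓlow v]

/-- if `K ≥ n` and `G` has a unit interval representation respecting
`lt`, then `Rep(G, <, ε, lbound)` is nonempty for every `lbound`. -/
theorem stmt13 {V : Type*} [Fintype V] (G : SimpleGraph V) (lt : V → V → Prop)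
    (hirr : ∀ v : V, ¬ lt v v)
    (htrans : ∀ a b c : V, lt a b → lt b c → lt a c)
    (hcomp : ∀ u v : V, ¬ Indist G u v → lt u v ∨ lt v u)
    (K : ℕ) (hK : 0 < K) (hKn : Fintype.card V ≤ K)
    (h : ∃ ℓ₀ : V → ℝ, IsUIRep G ℓ₀ ∧ ∀ u v : V, lt u v → ℓ₀ u ≤ ℓ₀ v)
    (lbound : V → ℝ) :
    ∃ ℓ : V → ℝ, GridRep G lt K lbound ℓ :=
  stmt13_general G lt K hKn h lbound
end
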